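/- Let G be holomorphic on a neighborhood of the closed disc of radius 4r > 0 centered at 0 in ℂ. If λ₁,…,λ_k are pairwise distinct with |λᵢ| ≤ 3r for all i, then |G[λ₁,…,λ_k]| ≤ 4^k · r^{1−k} · sup_{|λ|=4r} |G(λ)|. -/

import Mathlib

/-- Divided differences: G[λ]=G(λ),
G[λ₁,…,λ_{k+1}]=(G[λ₁,…,λ_k]−G[λ₂,…,λ_{k+1}])/(λ₁−λ_{k+1}). -/
noncomputable def divDiff (G : ℂ → ℂ) : List ℂ → ℂ
  | [] => 0
  | [a] => G a
  | a :: b :: l =>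
      (divDiff G (a :: (b :: l).dropLast) - divDiff G (b :: l)) /
        (a - (b :: l).getLast (List.cons_ne_nil _ _))
termination_by l => l.length
decreasing_by
  · simp [List.length_dropLast]
  · simp

/-!
Hermite's formula `2πi · G[λ₁,…,λ_k] = ∮_{|z-c|=R} G(z) / ∏ᵢ (z - λᵢ) dz` follows from
Cauchy's integral formula by induction on `k`, because the integrands satisfy the same
recursion as the divided differences. If every node lies at distance at least `δ` from the
circle and `|G| ≤ M` on it, the integrand is bounded by `M / δ^k`, whence
`|G[λ₁,…,λ_k]| ≤ R M / δ^k`; take `c = 0`, `R = 4r`, `δ = r`.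
-/

open Metric Complex Real

noncomputable def nodeProd (l : List ℂ) (z : ℂ) : ℂ := (l.map (z - ·)).prod

section nodeProd

@[simp]
theorem nodeProd_nil (z : ℂ) : nodeProd [] z = 1 := rfl

@[simp]
theorem nodeProd_cons (a : ℂ) (l : List ℂ) (z : ℂ) :
    nodeProd (a :: l) z = (z - a) * nodeProd l z := rfl

@[simp]
theorem nodeProd_append (l m : List ℂ) (z : ℂ) :
    nodeProd (l ++ m) z = nodeProd l z * nodeProd m z := by
  simp [nodeProd]

theorem continuous_nodeProd (l : List ℂ) : Continuous (nodeProd l) := by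
  induction l with
  | nil => exact continuous_const
  | cons a l ih =>
    have : nodeProd (a :: l) = fun z => (z - a) * nodeProd l z := rfl
    exact this ▸ (continuous_id.sub continuous_const).mul ih

theorem nodeProd_ne_zero {l : List ℂ} {z : ℂ} (h : z ∉ l) : nodeProd l z ≠ 0 := by
  induction l with
  | nil => simp
  | cons a l ih =>
    rw [List.mem_cons, not_or] at h
    exact mul_ne_zero (sub_ne_zero.2 h.1) (ih h.2)

theorem pow_length_le_norm_nodeProd {l : List ℂ} {z : ℂ} {δ : ℝ} (hδ : 0 ≤ δ)
    (h : ∀ w ∈ l, δ ≤ ‖z - w‖) : δ ^ l.length ≤ ‖nodeProd l z‖ := by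
  induction l with
  | nil => simp
  | cons a l ih =>
    rw [List.forall_mem_cons] at h
    rw [nodeProd_cons, norm_mul, List.length_cons, pow_succ']
    exact mul_le_mul h.1 (ih h.2) (pow_nonneg hδ _) (norm_nonneg _)

theorem inv_nodeProd_sub_inv_nodeProd {a c z : ℂ} (m : List ℂ) (ha : z ≠ a) (hc : z ≠ c) :
    (nodeProd (a :: m) z)⁻¹ - (nodeProd (m ++ [c]) z)⁻¹ =
      (a - c) * (nodeProd (a :: (m ++ [c])) z)⁻¹ := by
  have ha' : z - a ≠ 0 := sub_ne_zero.2 ha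
  have hc' : z - c ≠ 0 := sub_ne_zero.2 hc
  by_cases hm : nodeProd m z = 0
  · simp [hm]
  · simp only [nodeProd_cons, nodeProd_append, nodeProd_nil, mul_one]
    field_simp
    ring

end nodeProd

theorem divDiff_cons_append_singleton (G : ℂ → ℂ) (a c : ℂ) (m : List ℂ) :
    divDiff G (a :: (m ++ [c])) = (divDiff G (a :: m) - divDiff G (m ++ [c])) / (a - c) := by
  obtain ⟨b, l, h⟩ := List.exists_cons_of_ne_nil (List.concat_ne_nil c m)
  rw [h, divDiff]
  simp only [← h, List.dropLast_concat, List.getLast_concat]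

section Hermite

variable {G : ℂ → ℂ} {c : ℂ} {R : ℝ}

theorem circleIntegrable_div_nodeProd (hR : 0 ≤ R) (hG : ContinuousOn G (sphere c R))
    {l : List ℂ} (hl : ∀ x ∈ l, x ∈ ball c R) :
    CircleIntegrable (fun z => G z / nodeProd l z) c R := by
  refine ContinuousOn.circleIntegrable hR <|
    hG.div (continuous_nodeProd l).continuousOn fun z hz => nodeProd_ne_zero fun hzl => ?_
  exact (mem_sphere.1 hz).not_lt (mem_ball.1 (hl z hzl))

theorem circleIntegral_div_nodeProd (hG : DiffContOnCl ℂ G (ball c R)) {l : List ℂ}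
    (hl : l ≠ []) (hnd : l.Nodup) (hball : ∀ x ∈ l, x ∈ ball c R) :
    ∮ z in C(c, R), G z / nodeProd l z = 2 * π * I * divDiff G l := by
  obtain ⟨x, hx⟩ := List.exists_mem_of_ne_nil l hl
  have hR : 0 < R := pos_of_mem_ball (hball x hx)
  have hGs : ContinuousOn G (sphere c R) := by
    refine hG.continuousOn.mono ?_
    rw [closure_ball c hR.ne']
    exact sphere_subset_closedBall
  clear x hx
  induction l using divDiff.induct with
  | case1 => exact absurd rfl hl
  | case2 a =>
    have := hG.circleIntegral_sub_inv_smul (hball a (List.mem_singleton_self a))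
    simpa [div_eq_inv_mul, divDiff] using this
  | case3 a b l ih₁ ih₂ =>
    obtain ⟨m, e, hbl⟩ : ∃ m e, b :: l = m ++ [e] :=
      ⟨_, _, (List.dropLast_append_getLast (List.cons_ne_nil b l)).symm⟩
    rw [hbl, List.dropLast_concat] at ih₁
    rw [hbl] at ih₂ hnd hball ⊢
    have hae : a - e ≠ 0 := sub_ne_zero.2 fun h => (List.nodup_cons.1 hnd).1 (by simp [h])
    have hsub₁ : (a :: m).Sublist (a :: (m ++ [e])) :=
      (List.sublist_append_left m [e]).cons_cons a
    have hsub₂ : (m ++ [e]).Sublist (a :: (m ++ [e])) := List.sublist_cons_self a _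
    have hint₁ := circleIntegrable_div_nodeProd hR.le hGs fun x hx => hball x (hsub₁.mem hx)
    have hint₂ := circleIntegrable_div_nodeProd hR.le hGs fun x hx => hball x (hsub₂.mem hx)
    have hdiff : ∀ z ∈ sphere c R, G z / nodeProd (a :: m) z - G z / nodeProd (m ++ [e]) z =
        (a - e) • (G z / nodeProd (a :: (m ++ [e])) z) := by
      intro z hz
      have hne : ∀ x ∈ a :: (m ++ [e]), z ≠ x := fun x hx hzx =>
        (mem_sphere.1 hz).not_lt (mem_ball.1 (hzx ▸ hball x hx))
      simp only [div_eq_mul_inv, ← mul_sub, smul_eq_mul,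
        inv_nodeProd_sub_inv_nodeProd m (hne a (by simp)) (hne e (by simp))]
      ring
    have hrec : (a - e) * ∮ z in C(c, R), G z / nodeProd (a :: (m ++ [e])) z =
        2 * π * I * (divDiff G (a :: m) - divDiff G (m ++ [e])) := by
      rw [← smul_eq_mul, ← circleIntegral.integral_smul,
        ← circleIntegral.integral_congr hR.le hdiff, circleIntegral.integral_sub hint₁ hint₂,
        ih₁ (List.cons_ne_nil _ _) (hnd.sublist hsub₁) fun x hx => hball x (hsub₁.mem hx),
        ih₂ (by simp) (hnd.sublist hsub₂) fun x hx => hball x (hsub₂.mem hx)]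
      ring
    rw [divDiff_cons_append_singleton, mul_div_assoc', eq_div_iff hae, ← hrec]
    ring

theorem norm_divDiff_le (hG : DiffContOnCl ℂ G (ball c R)) {l : List ℂ} (hl : l ≠ [])
    (hnd : l.Nodup) {δ M : ℝ} (hδ : 0 < δ) (hlδ : ∀ x ∈ l, dist x c ≤ R - δ)
    (hM : ∀ z ∈ sphere c R, ‖G z‖ ≤ M) :
    ‖divDiff G l‖ ≤ R * M / δ ^ l.length := by
  obtain ⟨x, hx⟩ := List.exists_mem_of_ne_nil l hl
  have hR : 0 ≤ R := by linarith [hlδ x hx, dist_nonneg (x := x) (y := c)]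
  have hball : ∀ x ∈ l, x ∈ ball c R := fun x hx => mem_ball.2 (by linarith [hlδ x hx])
  have hbound : ∀ z ∈ sphere c R, ‖G z / nodeProd l z‖ ≤ M / δ ^ l.length := by
    intro z hz
    have hdist : ∀ w ∈ l, δ ≤ ‖z - w‖ := fun w hw => by
      rw [← dist_eq_norm]
      linarith [hlδ w hw, dist_triangle z w c, mem_sphere.1 hz]
    rw [norm_div]
    exact div_le_div₀ ((norm_nonneg _).trans (hM z hz)) (hM z hz) (pow_pos hδ _)
      (pow_length_le_norm_nodeProd hδ.le hdist)
  have h := circleIntegral.norm_integral_le_of_norm_le_const hR hbound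
  rw [circleIntegral_div_nodeProd hG hl hnd hball, norm_mul, norm_mul, norm_mul, norm_I,
    mul_one, norm_real, Real.norm_of_nonneg pi_pos.le, Complex.norm_ofNat] at h
  rw [mul_div_assoc]
  exact le_of_mul_le_mul_left (by linarith) (by positivity : (0:ℝ) < 2 * π)

end Hermite

theorem stmt2_general (r : ℝ) (hr : 0 < r) (U : Set ℂ)
    (hUb : Metric.closedBall (0 : ℂ) (4 * r) ⊆ U) (G : ℂ → ℂ)
    (hG : DifferentiableOn ℂ G U) (k : ℕ) (hk : 0 < k) (lam : Fin k → ℂ)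
    (hinj : Function.Injective lam) (hle : ∀ i, ‖lam i‖ ≤ 3 * r) :
    ‖divDiff G (List.ofFn lam)‖ ≤
      4 ^ k * r ^ ((1 : ℝ) - k) *
        sSup ((fun z => ‖G z‖) '' Metric.sphere (0 : ℂ) (4 * r)) := by
  set M := sSup ((fun z => ‖G z‖) '' sphere (0 : ℂ) (4 * r))
  have hbdd : BddAbove ((fun z => ‖G z‖) '' sphere (0 : ℂ) (4 * r)) :=
    (isCompact_sphere _ _).bddAbove_image <| continuous_norm.comp_continuousOn <|
      hG.continuousOn.mono (sphere_subset_closedBall.trans hUb)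
  have hM : ∀ z ∈ sphere (0 : ℂ) (4 * r), ‖G z‖ ≤ M := fun z hz => le_csSup hbdd ⟨z, hz, rfl⟩
  have hM₀ : 0 ≤ M := Real.sSup_nonneg <| by rintro _ ⟨z, -, rfl⟩; exact norm_nonneg _
  have hnodes : ∀ x ∈ List.ofFn lam, dist x 0 ≤ 4 * r - r := by
    rw [List.forall_mem_ofFn_iff]
    intro i
    linarith [hle i, dist_zero_right (lam i)]
  have h := norm_divDiff_le (hG.diffContOnCl_ball hUb) (by simp [hk.ne'])
    (List.nodup_ofFn.2 hinj) hr hnodes hM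
  rw [List.length_ofFn] at h
  calc ‖divDiff G (List.ofFn lam)‖ ≤ 4 * r * M / r ^ k := h
    _ = 4 * (r / r ^ k * M) := by ring
    _ ≤ 4 ^ k * (r / r ^ k * M) := by gcongr; exact le_self_pow₀ (by norm_num) hk.ne'
    _ = 4 ^ k * r ^ ((1 : ℝ) - k) * M := by
      rw [Real.rpow_sub hr, Real.rpow_one, Real.rpow_natCast]; ring

/-- Bound on divided differences at points of modulus ≤ 3r by the sup of |G| on the
circle of radius 4r. -/
theorem stmt2 (r : ℝ) (hr : 0 < r) (U : Set ℂ) (hU : IsOpen U)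
    (hUb : Metric.closedBall (0 : ℂ) (4 * r) ⊆ U) (G : ℂ → ℂ)
    (hG : DifferentiableOn ℂ G U) (k : ℕ) (hk : 0 < k) (lam : Fin k → ℂ)
    (hinj : Function.Injective lam) (hle : ∀ i, ‖lam i‖ ≤ 3 * r) :
    ‖divDiff G (List.ofFn lam)‖ ≤
      4 ^ k * r ^ ((1 : ℝ) - k) *
        sSup ((fun z => ‖G z‖) '' Metric.sphere (0 : ℂ) (4 * r)) :=
  stmt2_general r hr U hUb G hG k hk lam hinj hle
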